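/- arXiv:1703.02155 — 2 statements merged into one kernel-verified Lean document; each statement's English description precedes it below -/
import Mathlib

section
/- Let 𝒳 and Φ be measurable spaces, H₀ a probability measure on Φ, p : Φ × 𝒳 → ℝ≥0 jointly measurable, U > 0, and α, β > 0. Let Z_1, …, Z_N be finite subsets (Finsets) of 𝒳, and define the Poisson point process likelihood f(Z | ξ, φ) = ξ^{|Z|} · e^{-ξ} · U^{|Z|} · ∏_{z ∈ Z} p(φ, z) for ξ > 0. Let G₀ = Gamma(α, β) ⊗ H₀ be the prior on (0,∞) × Φ, where Gamma(α, β) is the Gamma distribution with density (β^α/Γ(α)) ξ^{α-1} e^{-βξ}. Assume c := ∫_Φ ∏_{j=1}^N ∏_{z ∈ Z_j} p(φ, z) dH₀(φ) satisfies 0 < c < ∞. Then the posterior — the normalization to a probability measure of the measure with density (ξ, φ) ↦ ∏_{j=1}^N f(Z_j | ξ, φ) with respect to G₀ — equals Gamma(α_𝒵, β_𝒵) ⊗ H_𝒵, where α_𝒵 = α + Σ_{j=1}^N |Z_j|, β_𝒵 = β + N, and H_𝒵 is the probability measure on Φ with density φ ↦ c^{-1} ∏_{j=1}^N ∏_{z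 ∈ Z_j} p(φ, z) with respect to H₀. (Proposition 3, conjugacy part: the Gamma–times–conjugate-prior family G₀ is conjugate with respect to the Poisson point process likelihood.) -/
/-!
On `ξ ≥ 0`, which carries the whole Gamma prior, the joint likelihood of the observations factors as
`U^K · ξ^K e^{-Nξ} · ∏_j ∏_{z ∈ Z_j} p(φ, z)` with `K = Σ_j |Z_j|`. Tilting `Gamma(α, β)` by
`ξ^K e^{-Nξ}` gives a constant multiple of `Gamma(α + K, β + N)`, tilting `H₀` by the product of
feature densities gives `c • H_𝒵`, and the tilt of a product measure by a product density is the
product of the tilts. The posterior is therefore a positive finite multiple of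
`Gamma(α + K, β + N) ⊗ H_𝒵`, and normalizing removes the multiple.
-/

open MeasureTheory ProbabilityTheory Real
open scoped ENNReal NNReal

section Normalization

variable {α : Type*} [MeasurableSpace α]

lemma inv_measure_univ_smul_smul (μ : Measure α) [IsProbabilityMeasure μ]
    {c : ℝ≥0∞} (hc₀ : c ≠ 0) (hc : c ≠ ∞) : ((c • μ) Set.univ)⁻¹ • (c • μ) = μ := by
  rw [Measure.smul_apply, measure_univ, smul_eq_mul, mul_one, smul_smul,
    ENNReal.inv_mul_cancel hc₀ hc, one_smul]

lemma lintegral_smul_withDensity_inv_lintegral_mul (μ : Measure α) (g : α → ℝ≥0∞)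
    (hg₀ : ∫⁻ x, g x ∂μ ≠ 0) (hg : ∫⁻ x, g x ∂μ ≠ ∞) :
    (∫⁻ x, g x ∂μ) • μ.withDensity (fun x => (∫⁻ y, g y ∂μ)⁻¹ * g x) = μ.withDensity g := by
  change _ • μ.withDensity ((∫⁻ y, g y ∂μ)⁻¹ • g) = _
  rw [withDensity_smul' _ _ (ENNReal.inv_ne_top.mpr hg₀), smul_smul,
    ENNReal.mul_inv_cancel hg₀ hg, one_smul]

lemma isProbabilityMeasure_withDensity_inv_lintegral_mul (μ : Measure α) (g : α → ℝ≥0∞)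
    (hg₀ : ∫⁻ x, g x ∂μ ≠ 0) (hg : ∫⁻ x, g x ∂μ ≠ ∞) :
    IsProbabilityMeasure (μ.withDensity fun x => (∫⁻ y, g y ∂μ)⁻¹ * g x) := by
  constructor
  rw [withDensity_apply _ MeasurableSet.univ, Measure.restrict_univ,
    lintegral_const_mul' _ _ (ENNReal.inv_ne_top.mpr hg₀), ENNReal.inv_mul_cancel hg₀ hg]

end Normalization

lemma measurable_gammaPDF (a r : ℝ) : Measurable (gammaPDF a r) :=
  (measurable_gammaPDFReal a r).ennreal_ofReal

lemma ae_nonneg_gammaMeasure (a r : ℝ) : ∀ᵐ x ∂gammaMeasure a r, 0 ≤ x := by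
  rw [gammaMeasure, ae_withDensity_iff (measurable_gammaPDF a r)]
  exact ae_of_all _ fun x hx => not_lt.mp fun hneg => hx (gammaPDF_of_neg hneg)

lemma gammaPDFReal_mul_rpow_mul_exp {a r s t x : ℝ} (has : 0 < a + s) (hrt : 0 < r + t)
    (hx : x ≠ 0) :
    gammaPDFReal a r x * (x ^ s * exp (-(t * x))) =
      r ^ a / Gamma a * (Gamma (a + s) / (r + t) ^ (a + s)) * gammaPDFReal (a + s) (r + t) x := by
  rcases hx.lt_or_gt with hneg | hpos
  · simp [gammaPDFReal, not_le.mpr hneg]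
  have hΓ : Gamma (a + s) ≠ 0 := (Gamma_pos_of_pos has).ne'
  have hpow : (r + t) ^ (a + s) ≠ 0 := (rpow_pos_of_pos hrt _).ne'
  have hrpow : x ^ (a + s - 1) = x ^ (a - 1) * x ^ s := by
    rw [← rpow_add hpos]; ring_nf
  have hexp : exp (-((r + t) * x)) = exp (-(r * x)) * exp (-(t * x)) := by
    rw [← exp_add]; ring_nf
  simp only [gammaPDFReal, if_pos hpos.le, hrpow, hexp]
  field_simp

lemma gammaMeasure_withDensity_rpow_mul_exp {a r s t : ℝ} (ha : 0 < a) (hr : 0 < r)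
    (has : 0 < a + s) (hrt : 0 < r + t) :
    (gammaMeasure a r).withDensity (fun x => ENNReal.ofReal (x ^ s * exp (-(t * x)))) =
      ENNReal.ofReal (r ^ a / Gamma a * (Gamma (a + s) / (r + t) ^ (a + s))) •
        gammaMeasure (a + s) (r + t) := by
  have hconst : 0 ≤ r ^ a / Gamma a * (Gamma (a + s) / (r + t) ^ (a + s)) := by positivity
  rw [gammaMeasure, gammaMeasure, ← withDensity_mul _ (measurable_gammaPDF a r) (by fun_prop),
    ← withDensity_smul _ (measurable_gammaPDF _ _)]
  refine withDensity_congr_ae ?_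
  filter_upwards [volume.ae_ne 0] with x hx
  simp only [Pi.mul_apply, Pi.smul_apply, smul_eq_mul, gammaPDF]
  rw [← ENNReal.ofReal_mul (gammaPDFReal_nonneg ha hr x), ← ENNReal.ofReal_mul hconst,
    gammaPDFReal_mul_rpow_mul_exp has hrt hx]

lemma prod_ofReal_pow_mul_exp_neg_mul_pow {ι : Type*} [Fintype ι] (n : ι → ℕ) {ξ U : ℝ}
    (hξ : 0 ≤ ξ) (hU : 0 ≤ U) :
    ∏ j, ENNReal.ofReal (ξ ^ n j * exp (-ξ) * U ^ n j) =
      ENNReal.ofReal (U ^ ∑ j, n j) *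
        ENNReal.ofReal (ξ ^ (∑ j, n j) * exp (-(Fintype.card ι * ξ))) := by
  rw [← ENNReal.ofReal_prod_of_nonneg fun j _ => by positivity,
    ← ENNReal.ofReal_mul (by positivity),
    Finset.prod_mul_distrib, Finset.prod_mul_distrib, Finset.prod_pow_eq_pow_sum,
    Finset.prod_pow_eq_pow_sum, Finset.prod_const, ← exp_nat_mul, Finset.card_univ]
  ring_nf

/-- **Proposition 3, conjugacy part.** The prior `G₀ = Gamma(α, β) ⊗ H₀` is conjugate with
respect to the Poisson point process likelihood
`f(Z | ξ, φ) = ξ^{|Z|} e^{-ξ} U^{|Z|} ∏_{z ∈ Z} p(φ, z)`: the posterior given observations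
`Z_1, …, Z_N` is `Gamma(α_𝒵, β_𝒵) ⊗ H_𝒵` with `α_𝒵 = α + Σ_j |Z_j|`, `β_𝒵 = β + N`, and
`H_𝒵` the probability measure with density `φ ↦ c⁻¹ ∏_j ∏_{z ∈ Z_j} p(φ, z)` w.r.t. `H₀`. -/
theorem poisson_point_process_conjugacy
    {𝒳 Φ : Type*} [MeasurableSpace 𝒳] [MeasurableSpace Φ]
    (H₀ : Measure Φ) [IsProbabilityMeasure H₀]
    (p : Φ × 𝒳 → ℝ≥0) (hp : Measurable p)
    (U : ℝ) (hU : 0 < U) (α β : ℝ) (hα : 0 < α) (hβ : 0 < β)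
    (N : ℕ) (Z : Fin N → Finset 𝒳)
    (f : Finset 𝒳 → ℝ × Φ → ℝ≥0∞)
    (hf : ∀ (S : Finset 𝒳) (ξφ : ℝ × Φ), f S ξφ =
      ENNReal.ofReal (ξφ.1 ^ S.card * Real.exp (-ξφ.1) * U ^ S.card) *
        ∏ z ∈ S, (p (ξφ.2, z) : ℝ≥0∞))
    (G₀ : Measure (ℝ × Φ)) (hG₀ : G₀ = (ProbabilityTheory.gammaMeasure α β).prod H₀)
    (c : ℝ≥0∞)
    (hc : c = ∫⁻ φ, ∏ j : Fin N, ∏ z ∈ Z j, (p (φ, z) : ℝ≥0∞) ∂H₀)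
    (hc_pos : 0 < c) (hc_fin : c < ∞)
    (HZ : Measure Φ)
    (hHZ : HZ = H₀.withDensity fun φ => c⁻¹ * ∏ j : Fin N, ∏ z ∈ Z j, (p (φ, z) : ℝ≥0∞))
    (M : Measure (ℝ × Φ))
    (hM : M = G₀.withDensity fun ξφ => ∏ j : Fin N, f (Z j) ξφ) :
    (M Set.univ)⁻¹ • M =
      (ProbabilityTheory.gammaMeasure (α + ∑ j : Fin N, ((Z j).card : ℝ)) (β + N)).prod HZ := by
  subst hc hHZ hM hG₀
  set g : Φ → ℝ≥0∞ := fun φ => ∏ j, ∏ z ∈ Z j, (p (φ, z) : ℝ≥0∞)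
  have hg : Measurable g := by fun_prop
  have hlik : (fun x => ∏ j, f (Z j) x) =ᵐ[(gammaMeasure α β).prod H₀]
      ENNReal.ofReal (U ^ ∑ j, (Z j).card) • fun x =>
        ENNReal.ofReal (x.1 ^ (∑ j, ((Z j).card : ℝ)) * exp (-(N * x.1))) * g x.2 := by
    filter_upwards [Measure.quasiMeasurePreserving_fst.ae (ae_nonneg_gammaMeasure α β)]
      with x hx
    simp only [hf, Finset.prod_mul_distrib, Pi.smul_apply, smul_eq_mul, g]
    rw [prod_ofReal_pow_mul_exp_neg_mul_pow _ hx hU.le, ← Nat.cast_sum, rpow_natCast,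
      Fintype.card_fin, mul_assoc]
  have hαK : 0 < α + ∑ j, ((Z j).card : ℝ) := by positivity
  have hβN : 0 < β + N := by positivity
  have := isProbabilityMeasure_withDensity_inv_lintegral_mul H₀ g hc_pos.ne' hc_fin.ne
  have := isProbabilityMeasure_gammaMeasure hαK hβN
  rw [withDensity_congr_ae hlik, withDensity_smul' _ _ ENNReal.ofReal_ne_top,
    ← prod_withDensity
      (f := fun ξ => ENNReal.ofReal (ξ ^ (∑ j, ((Z j).card : ℝ)) * exp (-(N * ξ)))) (by fun_prop) hg,
    gammaMeasure_withDensity_rpow_mul_exp hα hβ hαK hβN,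
    ← lintegral_smul_withDensity_inv_lintegral_mul H₀ g hc_pos.ne' hc_fin.ne,
    Measure.prod_smul_left, Measure.prod_smul_right, smul_smul (ENNReal.ofReal _),
    smul_smul (ENNReal.ofReal _ * _)]
  exact inv_measure_univ_smul_smul _ (by positivity) (by finiteness)
end

section
/- Let 𝒳 and Φ be measurable spaces, H₀ a probability measure on Φ, p : Φ × 𝒳 → ℝ≥0 jointly measurable, U > 0, and α, β > 0. Let Z_1, …, Z_N and X be finite subsets (Finsets) of 𝒳, with likelihood f(Z | ξ, φ) = ξ^{|Z|} e^{-ξ} U^{|Z|} ∏_{z ∈ Z} p(φ, z) and prior G₀ = Gamma(α, β) ⊗ H₀ on (0,∞) × Φ. Set α_𝒵 = α + Σ_j |Z_j|, β_𝒵 = β + N, assume c := ∫_Φ ∏_j ∏_{z ∈ Z_j} p(φ, z) dH₀(φ) ∈ (0, ∞), and let H_𝒵 be the probability measure with density φ ↦ c^{-1} ∏_j ∏_{z∈Z_j} p(φ, z) with respect to H₀. Then the predictive likelihood of X given 𝒵 = (Z_1,…,Z_N), i.e., the integral of f(X | ξ, φ) against the posterior Gamma(α_𝒵, β_𝒵)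 ⊗ H_𝒵, equals (Γ(α_𝒵 + |X|) · β_𝒵^{α_𝒵}) / (Γ(α_𝒵) · (β_𝒵 + 1)^{α_𝒵 + |X|}) · U^{|X|} · ∫_Φ ∏_{x ∈ X} p(φ, x) dH_𝒵(φ), as an identity in the extended nonnegative reals. (Proposition 3, predictive-likelihood part.) -/
/-!
Under the product posterior the integrand factors into a function of `ξ` times a function of `φ`,
so the predictive likelihood is a Gamma integral times `∫ ∏ p(φ, x) dH_𝒵`. The Gamma integral
follows from conjugacy: `ξ^n e^{-tξ}` times the `Gamma(a, b)` density is a constant multiple of the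
`Gamma(a + n, b + t)` density, and that constant is the integral.
-/

open MeasureTheory ProbabilityTheory
open scoped ENNReal NNReal

lemma gammaPDF_mul_pow_mul_exp_neg {a b t x : ℝ} (n : ℕ) (ha : 0 < a) (hb : 0 < b) (ht : 0 ≤ t)
    (hx : x ≠ 0) :
    gammaPDF a b x * ENNReal.ofReal (x ^ n * Real.exp (-(t * x))) =
      ENNReal.ofReal (b ^ a * Real.Gamma (a + n) / (Real.Gamma a * (b + t) ^ (a + n))) *
        gammaPDF (a + n) (b + t) x := by
  rcases hx.lt_or_gt with hneg | hpos
  · simp [gammaPDF_of_neg hneg]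
  have hΓa := Real.Gamma_pos_of_pos ha
  have hΓan := Real.Gamma_pos_of_pos (by positivity : 0 < a + n)
  have hbt : 0 < (b + t) ^ (a + n) := by positivity
  rw [gammaPDF_of_nonneg hpos.le, gammaPDF_of_nonneg hpos.le,
    ← ENNReal.ofReal_mul (by positivity), ← ENNReal.ofReal_mul (by positivity)]
  congr 1
  have hpow : x ^ (a + n - 1) = x ^ (a - 1) * x ^ n := by
    rw [show a + n - 1 = a - 1 + n by ring, Real.rpow_add_natCast hx]
  have hexp : Real.exp (-((b + t) * x)) = Real.exp (-(b * x)) * Real.exp (-(t * x)) := by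
    rw [← Real.exp_add]; ring_nf
  rw [hpow, hexp]
  field_simp

lemma lintegral_pow_mul_exp_neg_gammaMeasure {a b t : ℝ} (n : ℕ) (ha : 0 < a) (hb : 0 < b)
    (ht : 0 ≤ t) :
    ∫⁻ x, ENNReal.ofReal (x ^ n * Real.exp (-(t * x))) ∂gammaMeasure a b =
      ENNReal.ofReal (b ^ a * Real.Gamma (a + n) / (Real.Gamma a * (b + t) ^ (a + n))) := by
  have hpdf : Measurable (gammaPDF a b) := (measurable_gammaPDFReal a b).ennreal_ofReal
  rw [gammaMeasure, lintegral_withDensity_eq_lintegral_mul _ hpdf (by fun_prop)]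
  calc ∫⁻ x, (gammaPDF a b * fun x ↦ ENNReal.ofReal (x ^ n * Real.exp (-(t * x)))) x
      = ∫⁻ x, ENNReal.ofReal (b ^ a * Real.Gamma (a + n) / (Real.Gamma a * (b + t) ^ (a + n))) *
          gammaPDF (a + n) (b + t) x := by
        refine lintegral_congr_ae ((Measure.ae_ne volume 0).mono fun x hx ↦ ?_)
        exact gammaPDF_mul_pow_mul_exp_neg n ha hb ht hx
    _ = _ := by
        rw [lintegral_const_mul' _ _ ENNReal.ofReal_ne_top,
          lintegral_gammaPDF_eq_one (by positivity) (by positivity), mul_one]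

theorem poisson_point_process_predictive_likelihood_general
    {𝒳 Φ : Type*} [MeasurableSpace 𝒳] [MeasurableSpace Φ]
    (H₀ : Measure Φ) [IsProbabilityMeasure H₀]
    (p : Φ × 𝒳 → ℝ≥0) (hp : Measurable p)
    (U : ℝ) (hU : 0 < U) (α β : ℝ) (hα : 0 < α) (hβ : 0 < β)
    (N : ℕ) (Z : Fin N → Finset 𝒳) (X : Finset 𝒳)
    (f : Finset 𝒳 → ℝ × Φ → ℝ≥0∞)
    (hf : ∀ (S : Finset 𝒳) (ξφ : ℝ × Φ), f S ξφ =
      ENNReal.ofReal (ξφ.1 ^ S.card * Real.exp (-ξφ.1) * U ^ S.card) *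
        ∏ z ∈ S, (p (ξφ.2, z) : ℝ≥0∞))
    (αZ βZ : ℝ)
    (hαZ : αZ = α + ∑ j : Fin N, ((Z j).card : ℝ)) (hβZ : βZ = β + N)
    (c : ℝ≥0∞)
    (HZ : Measure Φ)
    (hHZ : HZ = H₀.withDensity fun φ => c⁻¹ * ∏ j : Fin N, ∏ z ∈ Z j, (p (φ, z) : ℝ≥0∞)) :
    ∫⁻ ξφ, f X ξφ ∂((ProbabilityTheory.gammaMeasure αZ βZ).prod HZ) =
      ENNReal.ofReal
          (Real.Gamma (αZ + X.card) * βZ ^ αZ /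
            (Real.Gamma αZ * (βZ + 1) ^ (αZ + X.card))) *
        ENNReal.ofReal (U ^ X.card) *
        ∫⁻ φ, ∏ x ∈ X, (p (φ, x) : ℝ≥0∞) ∂HZ := by
  subst hHZ
  have hαZ_pos : 0 < αZ := hαZ ▸ add_pos_of_pos_of_nonneg hα (by positivity)
  have hβZ_pos : 0 < βZ := hβZ ▸ add_pos_of_pos_of_nonneg hβ (by positivity)
  have hfX : ∀ ξφ : ℝ × Φ, f X ξφ =
      ENNReal.ofReal (ξφ.1 ^ X.card * Real.exp (-(1 * ξφ.1))) * ENNReal.ofReal (U ^ X.card) *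
        ∏ x ∈ X, (p (ξφ.2, x) : ℝ≥0∞) := fun ξφ ↦ by
    rw [hf, one_mul, ENNReal.ofReal_mul' (by positivity)]
  have hpX : Measurable fun φ ↦ ∏ x ∈ X, (p (φ, x) : ℝ≥0∞) := by
    fun_prop
  simp only [hfX]
  rw [lintegral_prod_mul (f := fun ξ ↦ ENNReal.ofReal (ξ ^ X.card * Real.exp (-(1 * ξ))) *
      ENNReal.ofReal (U ^ X.card)) (by fun_prop) hpX.aemeasurable,
    lintegral_mul_const' _ _ ENNReal.ofReal_ne_top,
    lintegral_pow_mul_exp_neg_gammaMeasure _ hαZ_pos hβZ_pos zero_le_one, mul_comm (βZ ^ αZ)]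

/-- **Proposition 3, predictive-likelihood part.** For the Poisson point process likelihood
`f(X | ξ, φ) = ξ^{|X|} e^{-ξ} U^{|X|} ∏_{x ∈ X} p(φ, x)` and posterior
`Gamma(α_𝒵, β_𝒵) ⊗ H_𝒵`, the predictive likelihood of a new point pattern `X` is
`f(X | 𝒵) = Γ(α_𝒵 + |X|) β_𝒵^{α_𝒵} / (Γ(α_𝒵) (β_𝒵 + 1)^{α_𝒵 + |X|}) · U^{|X|} ·
∫ ∏_{x ∈ X} p(φ, x) dH_𝒵(φ)`. -/
theorem poisson_point_process_predictive_likelihood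
    {𝒳 Φ : Type*} [MeasurableSpace 𝒳] [MeasurableSpace Φ]
    (H₀ : Measure Φ) [IsProbabilityMeasure H₀]
    (p : Φ × 𝒳 → ℝ≥0) (hp : Measurable p)
    (U : ℝ) (hU : 0 < U) (α β : ℝ) (hα : 0 < α) (hβ : 0 < β)
    (N : ℕ) (Z : Fin N → Finset 𝒳) (X : Finset 𝒳)
    (f : Finset 𝒳 → ℝ × Φ → ℝ≥0∞)
    (hf : ∀ (S : Finset 𝒳) (ξφ : ℝ × Φ), f S ξφ =
      ENNReal.ofReal (ξφ.1 ^ S.card * Real.exp (-ξφ.1) * U ^ S.card) *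
        ∏ z ∈ S, (p (ξφ.2, z) : ℝ≥0∞))
    (αZ βZ : ℝ)
    (hαZ : αZ = α + ∑ j : Fin N, ((Z j).card : ℝ)) (hβZ : βZ = β + N)
    (c : ℝ≥0∞)
    (hc : c = ∫⁻ φ, ∏ j : Fin N, ∏ z ∈ Z j, (p (φ, z) : ℝ≥0∞) ∂H₀)
    (hc_pos : 0 < c) (hc_fin : c < ∞)
    (HZ : Measure Φ)
    (hHZ : HZ = H₀.withDensity fun φ => c⁻¹ * ∏ j : Fin N, ∏ z ∈ Z j, (p (φ, z) : ℝ≥0∞)) :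
    ∫⁻ ξφ, f X ξφ ∂((ProbabilityTheory.gammaMeasure αZ βZ).prod HZ) =
      ENNReal.ofReal
          (Real.Gamma (αZ + X.card) * βZ ^ αZ /
            (Real.Gamma αZ * (βZ + 1) ^ (αZ + X.card))) *
        ENNReal.ofReal (U ^ X.card) *
        ∫⁻ φ, ∏ x ∈ X, (p (φ, x) : ℝ≥0∞) ∂HZ :=
  poisson_point_process_predictive_likelihood_general H₀ p hp U hU α β hα hβ N Z X f hf αZ βZ hαZ
    hβZ c HZ hHZ
end
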